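/- The map F : ℝ³ → ℝ³ defined by F(τ, v, u) = (e^{τ sin v} cos(τ cos v), e^{τ sin v} sin(τ cos v) cos u, e^{τ sin v} sin(τ cos v) sin u) is differentiable, and the absolute value of the determinant of its Jacobian matrix at (τ, v, u) equals e^{3 τ sin v} · |τ · sin(τ cos v)|. -/

import Mathlib

open Real

/-- The geodesic polar coordinate map of `S² × ℝ` around `(1,0,0)` in the Euclidean
model: `F(τ, v, u)` with radial parameter `τ`, altitude `v` and longitude `u`. -/
noncomputable def Fpolar (p : Fin 3 → ℝ) : Fin 3 → ℝ :=
  ![Real.exp (p 0 * Real.sin (p 1)) * Real.cos (p 0 * Real.cos (p 1)),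
    Real.exp (p 0 * Real.sin (p 1)) * Real.sin (p 0 * Real.cos (p 1)) * Real.cos (p 2),
    Real.exp (p 0 * Real.sin (p 1)) * Real.sin (p 0 * Real.cos (p 1)) * Real.sin (p 2)]

/-!
`F` factors as `G ∘ P`, where `P(τ, v, u) = (τ sin v, τ cos v, u)` is a planar polar change of
variables, with Jacobian `-τ`, and `G(a, b, u) = eᵃ (cos b, sin b cos u, sin b sin u)` is the
spherical coordinate map with radius `eᵃ`, with Jacobian `eᵃ · (eᵃ)² sin b`.
The chain rule multiplies the two determinants.
-/

open ContinuousLinearMap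

theorem ContinuousLinearMap.det_comp {R M : Type*} [CommRing R] [TopologicalSpace M]
    [AddCommGroup M] [Module R M] (A B : M →L[R] M) : (A.comp B).det = A.det * B.det := by
  rw [det, toLinearMap_comp, LinearMap.det_comp]

noncomputable def planarPolar (p : Fin 3 → ℝ) : Fin 3 → ℝ :=
  ![p 0 * sin (p 1), p 0 * cos (p 1), p 2]

noncomputable def expSphericalCoord (q : Fin 3 → ℝ) : Fin 3 → ℝ :=
  ![exp (q 0) * cos (q 1), exp (q 0) * sin (q 1) * cos (q 2), exp (q 0) * sin (q 1) * sin (q 2)]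

theorem Fpolar_eq_comp : Fpolar = expSphericalCoord ∘ planarPolar := rfl

noncomputable def fderivPlanarPolar (p : Fin 3 → ℝ) : (Fin 3 → ℝ) →L[ℝ] Fin 3 → ℝ :=
  (Matrix.toLin' !![sin (p 1), p 0 * cos (p 1), 0;
    cos (p 1), -(p 0 * sin (p 1)), 0;
    0, 0, 1]).toContinuousLinearMap

noncomputable def fderivExpSphericalCoord (q : Fin 3 → ℝ) : (Fin 3 → ℝ) →L[ℝ] Fin 3 → ℝ :=
  (Matrix.toLin' !![exp (q 0) * cos (q 1), -(exp (q 0) * sin (q 1)), 0;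
    exp (q 0) * sin (q 1) * cos (q 2), exp (q 0) * cos (q 1) * cos (q 2),
      -(exp (q 0) * sin (q 1) * sin (q 2));
    exp (q 0) * sin (q 1) * sin (q 2), exp (q 0) * cos (q 1) * sin (q 2),
      exp (q 0) * sin (q 1) * cos (q 2)]).toContinuousLinearMap

theorem hasFDerivAt_planarPolar (p : Fin 3 → ℝ) :
    HasFDerivAt planarPolar (fderivPlanarPolar p) p := by
  have h0 := hasFDerivAt_apply (𝕜 := ℝ) (F' := fun _ => ℝ) 0 p
  have h1 := hasFDerivAt_apply (𝕜 := ℝ) (F' := fun _ => ℝ) 1 p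
  have h2 := hasFDerivAt_apply (𝕜 := ℝ) (F' := fun _ => ℝ) 2 p
  refine hasFDerivAt_pi'.2 fun i => ?_
  fin_cases i
  · refine (h0.mul ((hasDerivAt_sin (p 1)).comp_hasFDerivAt p h1)).congr_fderiv ?_
    ext x
    simp [fderivPlanarPolar, dotProduct, Fin.sum_univ_three]
    ring
  · refine (h0.mul ((hasDerivAt_cos (p 1)).comp_hasFDerivAt p h1)).congr_fderiv ?_
    ext x
    simp [fderivPlanarPolar, dotProduct, Fin.sum_univ_three]
    ring
  · refine h2.congr_fderiv ?_
    ext x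
    simp [fderivPlanarPolar, dotProduct, Fin.sum_univ_three]

theorem hasFDerivAt_expSphericalCoord (q : Fin 3 → ℝ) :
    HasFDerivAt expSphericalCoord (fderivExpSphericalCoord q) q := by
  have h0 := hasFDerivAt_apply (𝕜 := ℝ) (F' := fun _ => ℝ) 0 q
  have h1 := hasFDerivAt_apply (𝕜 := ℝ) (F' := fun _ => ℝ) 1 q
  have h2 := hasFDerivAt_apply (𝕜 := ℝ) (F' := fun _ => ℝ) 2 q
  have hexp := (hasDerivAt_exp (q 0)).comp_hasFDerivAt q h0
  have hsin := (hasDerivAt_sin (q 1)).comp_hasFDerivAt q h1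
  refine hasFDerivAt_pi'.2 fun i => ?_
  fin_cases i
  · refine (hexp.mul ((hasDerivAt_cos (q 1)).comp_hasFDerivAt q h1)).congr_fderiv ?_
    ext x
    simp [fderivExpSphericalCoord, dotProduct, Fin.sum_univ_three]
    ring
  · refine ((hexp.mul hsin).mul ((hasDerivAt_cos (q 2)).comp_hasFDerivAt q h2)).congr_fderiv ?_
    ext x
    simp [fderivExpSphericalCoord, dotProduct, Fin.sum_univ_three]
    ring
  · refine ((hexp.mul hsin).mul ((hasDerivAt_sin (q 2)).comp_hasFDerivAt q h2)).congr_fderiv ?_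
    ext x
    simp [fderivExpSphericalCoord, dotProduct, Fin.sum_univ_three]
    ring

theorem det_fderivPlanarPolar (p : Fin 3 → ℝ) : (fderivPlanarPolar p).det = -p 0 := by
  simp [fderivPlanarPolar, Matrix.det_fin_three]
  linear_combination (-p 0) * sin_sq_add_cos_sq (p 1)

theorem det_fderivExpSphericalCoord (q : Fin 3 → ℝ) :
    (fderivExpSphericalCoord q).det = exp (3 * q 0) * sin (q 1) := by
  simp [fderivExpSphericalCoord, Matrix.det_fin_three]
  rw [show exp (3 * q 0) = exp (q 0) ^ 3 by rw [← exp_nat_mul]; norm_num]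
  linear_combination exp (q 0) ^ 3 * sin (q 1) *
    ((sin (q 1) ^ 2 + cos (q 1) ^ 2) * sin_sq_add_cos_sq (q 2) + sin_sq_add_cos_sq (q 1))

theorem hasFDerivAt_Fpolar (p : Fin 3 → ℝ) :
    HasFDerivAt Fpolar ((fderivExpSphericalCoord (planarPolar p)).comp (fderivPlanarPolar p)) p :=
  Fpolar_eq_comp ▸ (hasFDerivAt_expSphericalCoord _).comp p (hasFDerivAt_planarPolar p)

theorem jacobian_polar :
    Differentiable ℝ Fpolar ∧
    ∀ τ v u : ℝ, |(fderiv ℝ Fpolar ![τ, v, u]).det| =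
      Real.exp (3 * (τ * Real.sin v)) * |τ * Real.sin (τ * Real.cos v)| := by
  refine ⟨fun p => (hasFDerivAt_Fpolar p).differentiableAt, fun τ v u => ?_⟩
  rw [(hasFDerivAt_Fpolar _).fderiv, det_comp, det_fderivExpSphericalCoord, det_fderivPlanarPolar]
  simp [planarPolar, abs_mul]
  ring
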